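/- Suppose ⟨X_n, π^{n+1}_n : n ∈ ω⟩ is an inverse system of compact Hausdorff spaces with surjective continuous bonding maps, X = lim← X_n is the inverse limit, p ∈ X with projections p_n = π^ω_n(p), such that: (A) each p_n is a weak P_{ℵ_n}-point in X_n; (B) each w(X_n) < ℵ_ω; (C) each (π^n_0)⁻¹{p_0} is nowhere dense in X_n. Then for every regular uncountable cardinal κ, no κ-sequence of points of X distinct from p converges to p, and χ(p, X) = w(X) = ℵ_ω provided w(X_n) = ℵ_n for each n. -/

import Mathlib

/-!
A point of the limit other than `p` differs from `p` in some coordinate, and then in every later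
one. Given a `κ`-sequence avoiding `p`, with `κ` regular and uncountable, pigeonhole fixes such a
coordinate `m` for `κ` of its terms. If `κ < ℵ_ω`, then `κ < ℵ_n` for some `n ≥ m`, and the weak
`P_{ℵ_n}`-point `p_n` has a neighbourhood missing the `n`-th coordinates of all these terms;
`κ = ℵ_ω` is singular; if `κ > ℵ_ω > w(X_m)`, a second pigeonhole over a base of `X_m` yields a
basic neighbourhood of `p_m` missing `κ` of them.

By (C), every neighbourhood of `p` contains a point moving the `0`-th coordinate. Choosing one
in each member of a local base of size `< ℵ_n` gives fewer than `ℵ_n` points of `X_n` other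
than `p_n` that accumulate at `p_n`, contradicting (A); so `χ(p) ≥ ℵ_ω`. Conversely the
preimages of basic open sets of the `X_n` form a base of size `ℵ₀ · sup_n w(X_n)`.
-/

open Cardinal TopologicalSpace

/-- The weight of a topological space: the least cardinality of a base. -/
noncomputable def weight (X : Type*) [TopologicalSpace X] : Cardinal :=
  ⨅ B : {B : Set (Set X) // IsTopologicalBasis B}, #B.1

/-- `B` is a local base at `p`. -/
def IsLocalBase {X : Type*} [TopologicalSpace X] (p : X) (B : Set (Set X)) : Prop :=
  (∀ U ∈ B, U ∈ nhds p) ∧ ∀ V ∈ nhds p, ∃ U ∈ B, U ⊆ V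

/-- The character of a point: the least cardinality of a local base at it. -/
noncomputable def character {X : Type*} [TopologicalSpace X] (p : X) : Cardinal :=
  ⨅ B : {B : Set (Set X) // IsLocalBase p B}, #B.1

/-- A `κ`-sequence `f` converges to `p` iff every neighborhood of `p` contains all but
fewer than `κ` of its terms. -/
def ConvergesTo {ι X : Type*} [TopologicalSpace X] (κ : Cardinal) (f : ι → X) (p : X) : Prop :=
  ∀ U ∈ nhds p, #{α | f α ∉ U} < κ

/-- The bonding map `π^n_0 : X_n → X_0` of an inverse system. -/
def bond {X : ℕ → Type*} (π : ∀ n, X (n + 1) → X n) : ∀ n, X n → X 0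
  | 0 => id
  | n + 1 => fun z => bond π n (π n z)

open Filter Topology
open scoped Ordinal

universe u v

theorem Cardinal.IsRegular.exists_le_mk_inter {ι : Type u} {β : Type v} {κ : Cardinal.{u}}
    (hκ : κ.IsRegular) {s : Set ι} (hs : κ ≤ #s) {t : β → Set ι} (hst : s ⊆ ⋃ b, t b)
    (hβ : Cardinal.lift.{u} #β < Cardinal.lift.{v} κ) : ∃ b, κ ≤ #↥(s ∩ t b) := by
  by_contra! h
  have hs_eq : s = ⋃ b, s ∩ t b := by rw [← Set.inter_iUnion, Set.inter_eq_left.2 hst]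
  have hsum : (sum fun b => Cardinal.lift.{v} #↥(s ∩ t b)) < Cardinal.lift.{v} κ :=
    sum_lt_lift_of_isRegular hκ.lift hβ fun b => lift_lt.2 (h b)
  have hlt : Cardinal.lift.{v} #s < Cardinal.lift.{v} κ := by
    rw [hs_eq]
    refine mk_iUnion_le_sum_mk_lift.trans_lt ?_
    rwa [← lift_sum, lift_id'.{_, u}] at hsum
  exact (lift_lt.1 hlt).not_ge hs

theorem Cardinal.exists_lt_aleph_natCast_of_lt_aleph_omega0 {c : Cardinal.{u}} (h : c < ℵ_ ω) :
    ∃ n : ℕ, c < ℵ_ n := by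
  have : Nonempty (Set.Iio ω) := ⟨⟨0, Ordinal.omega0_pos⟩⟩
  rw [aleph_limit Ordinal.isSuccLimit_omega0, lt_ciSup_iff bddAbove_of_small] at h
  obtain ⟨⟨a, ha⟩, hca⟩ := h
  obtain ⟨n, rfl⟩ := Ordinal.lt_omega0.1 ha
  exact ⟨n, hca⟩

theorem Cardinal.aleph_natCast_le_aleph_omega0 (n : ℕ) : ℵ_ n ≤ ℵ_ ω :=
  aleph_le_aleph.2 (Ordinal.natCast_lt_omega0 n).le

section Weight

variable {Y : Type u} [TopologicalSpace Y]

theorem weight_le_mk {B : Set (Set Y)} (hB : IsTopologicalBasis B) : weight Y ≤ #B :=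
  ciInf_le' (fun B : {B : Set (Set Y) // IsTopologicalBasis B} => #B.1) ⟨B, hB⟩

theorem exists_isTopologicalBasis_mk_eq_weight :
    ∃ B : Set (Set Y), IsTopologicalBasis B ∧ #B = weight Y := by
  have : Nonempty {B : Set (Set Y) // IsTopologicalBasis B} := ⟨⟨_, isTopologicalBasis_opens⟩⟩
  obtain ⟨⟨B, hB⟩, hBw⟩ := csInf_mem (Set.range_nonempty
    fun B : {B : Set (Set Y) // IsTopologicalBasis B} => #B.1)
  exact ⟨B, hB, hBw⟩

theorem le_character {p : Y} {c : Cardinal} (h : ∀ B, IsLocalBase p B → c ≤ #B) :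
    c ≤ character p :=
  have : Nonempty {B : Set (Set Y) // IsLocalBase p B} :=
    ⟨⟨{V | V ∈ 𝓝 p}, fun _ hV => hV, fun V hV => ⟨V, hV, subset_rfl⟩⟩⟩
  le_ciInf fun B => h B.1 B.2

theorem TopologicalSpace.IsTopologicalBasis.isLocalBase {B : Set (Set Y)}
    (hB : IsTopologicalBasis B) (p : Y) :
    IsLocalBase p {U ∈ B | p ∈ U} :=
  ⟨fun U hU => (hB.isOpen hU.1).mem_nhds hU.2, fun V hV => by
    obtain ⟨U, hUB, hpU, hUV⟩ := hB.mem_nhds_iff.1 hV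
    exact ⟨U, ⟨hUB, hpU⟩, hUV⟩⟩

theorem character_le_weight (p : Y) : character p ≤ weight Y := by
  obtain ⟨B, hB, hBw⟩ := exists_isTopologicalBasis_mk_eq_weight (Y := Y)
  calc character p ≤ #{U ∈ B | p ∈ U} :=
        ciInf_le' (fun B : {B : Set (Set Y) // IsLocalBase p B} => #B.1) ⟨_, hB.isLocalBase p⟩
    _ ≤ #B := mk_le_mk_of_subset (Set.sep_subset _ _)
    _ = weight Y := hBw

theorem exists_mem_nhds_le_mk_inter [T1Space Y] {y : Y} {ι : Type v} {κ : Cardinal.{v}}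
    (hκ : κ.IsRegular) (hw : Cardinal.lift.{v} (weight Y) < Cardinal.lift.{u} κ)
    {g : ι → Y} {s : Set ι} (hs : κ ≤ #s) (hg : ∀ α ∈ s, g α ≠ y) :
    ∃ U ∈ 𝓝 y, κ ≤ #↥(s ∩ {α | g α ∉ U}) := by
  obtain ⟨B, hB, hBw⟩ := exists_isTopologicalBasis_mk_eq_weight (Y := Y)
  have hcover : s ⊆ ⋃ U : {U ∈ B | y ∈ U}, {α | g α ∉ U.1} := fun α hα => by
    obtain ⟨U, hUB, hyU, hU⟩ :=
      hB.mem_nhds_iff.1 (isOpen_compl_singleton.mem_nhds (hg α hα).symm)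
    exact Set.mem_iUnion.2 ⟨⟨U, hUB, hyU⟩, fun hgU => hU hgU rfl⟩
  have hsmall : Cardinal.lift.{v} #{U ∈ B | y ∈ U} < Cardinal.lift.{u} κ :=
    (lift_le.2 ((mk_le_mk_of_subset (Set.sep_subset _ _)).trans hBw.le)).trans_lt hw
  obtain ⟨⟨U, hUB, hyU⟩, hU⟩ := hκ.exists_le_mk_inter hs hcover hsmall
  exact ⟨U, (hB.isOpen hUB).mem_nhds hyU, hU⟩

end Weight

def IsWeakPPoint {Y : Type*} [TopologicalSpace Y] (κ : Cardinal) (y : Y) : Prop :=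
  ∀ S : Set Y, S ⊆ {y}ᶜ → #S < κ → y ∉ closure S

theorem IsWeakPPoint.compl_closure_mem_nhds {Y : Type*} [TopologicalSpace Y] {κ : Cardinal}
    {y : Y} (hy : IsWeakPPoint κ y) {S : Set Y} (hyS : y ∉ S) (hS : #S < κ) :
    (closure S)ᶜ ∈ 𝓝 y :=
  isClosed_closure.isOpen_compl.mem_nhds (hy S (fun _ hz hzy => hyS (hzy ▸ hz)) hS)

abbrev InverseLimit {X : ℕ → Type*} (π : ∀ n, X (n + 1) → X n) : Type _ :=
  {x : ∀ n, X n // ∀ n, π n (x (n + 1)) = x n}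

namespace InverseLimit

variable {X : ℕ → Type u} {π : ∀ n, X (n + 1) → X n}

theorem apply_eq_of_le {x y : InverseLimit π} {m n : ℕ} (hmn : m ≤ n) (h : x.1 n = y.1 n) :
    x.1 m = y.1 m := by
  induction n, hmn using Nat.le_induction with
  | base => exact h
  | succ n _ ih => exact ih (by rw [← x.2 n, ← y.2 n, h])

theorem bond_apply (x : InverseLimit π) (n : ℕ) : bond π n (x.1 n) = x.1 0 := by
  induction n with
  | zero => rfl
  | succ n ih => exact (congrArg (bond π n) (x.2 n)).trans ih

theorem surjective_apply (hsurj : ∀ n, Function.Surjective (π n)) (n : ℕ) :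
    Function.Surjective fun x : InverseLimit π => x.1 n := by
  induction n generalizing X with
  | zero =>
    intro w
    exact ⟨⟨fun k => Nat.rec (motive := X) w (fun k z => Function.surjInv (hsurj k) z) k,
      fun k => Function.surjInv_eq (hsurj k) _⟩, rfl⟩
  | succ n ih =>
    intro w
    -- a thread of the shifted system `X (· + 1)` extends to `X` by prepending its image in `X 0`
    obtain ⟨x, hx⟩ := ih (X := fun k => X (k + 1)) (π := fun k => π (k + 1))
      (fun k => hsurj (k + 1)) w
    exact ⟨⟨fun | 0 => π 0 (x.1 0) | k + 1 => x.1 k, fun | 0 => rfl | k + 1 => x.2 k⟩, hx⟩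

theorem exists_le_mk_setOf_apply_ne {ι : Type v} {κ : Cardinal.{v}} (hκ : κ.IsRegular)
    (hκ₀ : ℵ₀ < κ) (hι : κ ≤ #ι) {f : ι → InverseLimit π} {p : InverseLimit π}
    (hf : ∀ α, f α ≠ p) : ∃ m, κ ≤ #{α | (f α).1 m ≠ p.1 m} := by
  have hcover : Set.univ ⊆ ⋃ n, {α | (f α).1 n ≠ p.1 n} := fun α _ => by
    by_contra h
    simp only [Set.mem_iUnion, Set.mem_ofPred_eq, not_exists, not_not] at h
    exact hf α (Subtype.ext (funext h))
  simpa using hκ.exists_le_mk_inter (by rwa [mk_univ]) hcover (by simpa using hκ₀)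

variable [∀ n, TopologicalSpace (X n)]

theorem continuous_apply (n : ℕ) : Continuous fun x : InverseLimit π => x.1 n :=
  (_root_.continuous_apply n).comp continuous_subtype_val

theorem nhds_eq_iInf_comap (x : InverseLimit π) :
    𝓝 x = ⨅ n, comap (fun y : InverseLimit π => y.1 n) (𝓝 (x.1 n)) := by
  rw [nhds_induced, nhds_pi, Filter.pi, comap_iInf]
  simp only [comap_comap]
  rfl

theorem mem_nhds_iff (hcont : ∀ n, Continuous (π n)) {x : InverseLimit π}
    {U : Set (InverseLimit π)} :
    U ∈ 𝓝 x ↔ ∃ n, ∃ V ∈ 𝓝 (x.1 n), (fun y : InverseLimit π => y.1 n) ⁻¹' V ⊆ U := by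
  have hanti : Antitone fun n => comap (fun y : InverseLimit π => y.1 n) (𝓝 (x.1 n)) :=
    antitone_nat_of_succ_le fun n => by
      have : (fun y : InverseLimit π => y.1 n) = π n ∘ fun y => y.1 (n + 1) :=
        funext fun y => (y.2 n).symm
      rw [this, ← comap_comap, ← x.2 n]
      exact comap_mono ((hcont n).tendsto _).le_comap
  rw [nhds_eq_iInf_comap, mem_iInf_of_directed hanti.directed_ge]
  simp only [mem_comap]

theorem weight_le (hcont : ∀ n, Continuous (π n)) {c : Cardinal.{u}} (hc : ℵ₀ ≤ c)
    (hw : ∀ n, weight (X n) ≤ c) : weight (InverseLimit π) ≤ c := by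
  choose B hB hBw using fun n => exists_isTopologicalBasis_mk_eq_weight (Y := X n)
  let D : ℕ → Set (Set (InverseLimit π)) := fun n =>
    (fun W => (fun y : InverseLimit π => y.1 n) ⁻¹' W) '' B n
  have hD : IsTopologicalBasis (⋃ n, D n) := by
    refine isTopologicalBasis_of_isOpen_of_nhds ?_ fun x U hxU hU => ?_
    · simp only [D, Set.mem_iUnion, Set.mem_image]
      rintro _ ⟨n, W, hW, rfl⟩
      exact ((hB n).isOpen hW).preimage (continuous_apply n)
    · obtain ⟨n, V, hV, hVU⟩ := (mem_nhds_iff hcont).1 (hU.mem_nhds hxU)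
      obtain ⟨W, hWB, hxW, hWV⟩ := (hB n).mem_nhds_iff.1 hV
      exact ⟨_, Set.mem_iUnion.2 ⟨n, W, hWB, rfl⟩, hxW, (Set.preimage_mono hWV).trans hVU⟩
  have hDc : #(⋃ n, D n) ≤ ℵ₀ * c := by
    have := mk_iUnion_le_lift D
    rw [lift_uzero, mk_nat, lift_aleph0] at this
    refine this.trans (mul_le_mul_right (ciSup_le fun n => ?_) _)
    rw [lift_uzero]
    exact mk_image_le.trans ((hBw n).trans_le (hw n))
  exact (weight_le_mk hD).trans (hDc.trans_eq (aleph0_mul_eq hc))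

theorem exists_mem_apply_zero_ne (hcont : ∀ n, Continuous (π n))
    (hsurj : ∀ n, Function.Surjective (π n)) {a : X 0}
    (hC : ∀ n, IsNowhereDense (bond π n ⁻¹' {a})) {x : InverseLimit π} {U : Set (InverseLimit π)}
    (hU : U ∈ 𝓝 x) : ∃ y ∈ U, y.1 0 ≠ a := by
  obtain ⟨n, V, hV, hVU⟩ := (mem_nhds_iff hcont).1 hU
  have hVa : ¬ V ⊆ bond π n ⁻¹' {a} := fun hVa => by
    have := interior_mono subset_closure (mem_interior_iff_mem_nhds.2 hV)
    rwa [(hC n).mono hVa] at this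
  obtain ⟨w, hwV, hwa⟩ := Set.not_subset.1 hVa
  obtain ⟨y, rfl⟩ := surjective_apply hsurj n w
  exact ⟨y, hVU hwV, by rwa [← bond_apply y n]⟩

theorem aleph_omega0_le_character (hcont : ∀ n, Continuous (π n))
    (hsurj : ∀ n, Function.Surjective (π n)) {p : InverseLimit π}
    (hA : ∀ n : ℕ, IsWeakPPoint (ℵ_ n) (p.1 n)) (hC : ∀ n, IsNowhereDense (bond π n ⁻¹' {p.1 0})) :
    ℵ_ ω ≤ character p := by
  refine le_character fun B hB => ?_
  by_contra! hBω
  obtain ⟨n, hBn⟩ := exists_lt_aleph_natCast_of_lt_aleph_omega0 hBω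
  choose y hyU hy0 using fun U : B => exists_mem_apply_zero_ne hcont hsurj hC (hB.1 U U.2)
  have hpS : p.1 n ∉ Set.range fun U : B => (y U).1 n := fun ⟨U, hU⟩ =>
    hy0 U (apply_eq_of_le (Nat.zero_le n) hU)
  obtain ⟨U, hUB, hU⟩ := hB.2 _ ((continuous_apply n).continuousAt.preimage_mem_nhds
    ((hA n).compl_closure_mem_nhds hpS (mk_range_le.trans_lt hBn)))
  exact hU (hyU ⟨U, hUB⟩) (subset_closure ⟨⟨U, hUB⟩, rfl⟩)

theorem not_convergesTo [∀ n, T1Space (X n)] {p : InverseLimit π}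
    (hA : ∀ n : ℕ, IsWeakPPoint (ℵ_ n) (p.1 n)) (hB : ∀ n, weight (X n) < ℵ_ ω)
    {ι : Type v} {κ : Cardinal.{v}} (hκ : κ.IsRegular) (hκ₀ : ℵ₀ < κ) (hι : #ι = κ)
    {f : ι → InverseLimit π} (hf : ∀ α, f α ≠ p) : ¬ ConvergesTo κ f p := by
  intro hconv
  suffices ∃ U ∈ 𝓝 p, ∃ s : Set ι, κ ≤ #s ∧ ∀ α ∈ s, f α ∉ U by
    obtain ⟨U, hU, s, hs, hsU⟩ := this
    exact (hconv U hU).not_ge (hs.trans (mk_le_mk_of_subset hsU))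
  obtain ⟨m, hm⟩ := exists_le_mk_setOf_apply_ne hκ hκ₀ hι.ge hf
  set s := {α | (f α).1 m ≠ p.1 m}
  have hne : ∀ n ≥ m, ∀ α ∈ s, (f α).1 n ≠ p.1 n := fun n hn α hα h =>
    hα (apply_eq_of_le hn h)
  rcases lt_trichotomy κ (ℵ_ ω) with hlt | rfl | hgt
  · obtain ⟨n, hn⟩ := exists_lt_aleph_natCast_of_lt_aleph_omega0 hlt
    set N := max m n
    have hpS : p.1 N ∉ (fun α => (f α).1 N) '' s := fun ⟨α, hα, h⟩ =>
      hne N (le_max_left _ _) α hα h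
    have hS : #((fun α => (f α).1 N) '' s) < ℵ_ N := by
      have hsN : #s < ℵ_ N := (mk_set_le s).trans_lt <| hι ▸ hn.trans_le
        (aleph_le_aleph.2 (by exact_mod_cast le_max_right m n))
      exact lift_lt_aleph_natCast.1 (mk_image_le_lift.trans_lt (lift_lt_aleph_natCast.2 hsN))
    exact ⟨_, (continuous_apply N).continuousAt.preimage_mem_nhds
      ((hA N).compl_closure_mem_nhds hpS hS), s, hm,
      fun α hα hfα => hfα (subset_closure ⟨α, hα, rfl⟩)⟩
  · exact absurd hκ isSingular_aleph_omega0.not_isRegular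
  · have hw : Cardinal.lift.{v} (weight (X m)) < Cardinal.lift.{u} κ :=
      calc Cardinal.lift.{v} (weight (X m)) < Cardinal.lift.{v} (ℵ_ ω) := lift_lt.2 (hB m)
        _ = Cardinal.lift.{u} (ℵ_ ω) := by simp only [lift_aleph, Ordinal.lift_omega0]
        _ < Cardinal.lift.{u} κ := lift_lt.2 hgt
    obtain ⟨V, hV, hsV⟩ := exists_mem_nhds_le_mk_inter hκ hw (g := fun α => (f α).1 m) hm
      fun α hα => hne m le_rfl α hα
    exact ⟨_, (continuous_apply m).continuousAt.preimage_mem_nhds hV, _, hsV, fun α hα => hα.2⟩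

end InverseLimit

theorem inverse_limit_lemma_general (X : ℕ → Type) [∀ n, TopologicalSpace (X n)]
    [∀ n, T2Space (X n)]
    (π : ∀ n, X (n + 1) → X n) (hcont : ∀ n, Continuous (π n))
    (hsurj : ∀ n, Function.Surjective (π n))
    (p : {f : ∀ n, X n // ∀ n, π n (f (n + 1)) = f n})
    (hA : ∀ n, ∀ S : Set (X n), S ⊆ {p.1 n}ᶜ → #S < aleph n → p.1 n ∉ closure S)
    (hB : ∀ n, weight (X n) < aleph Ordinal.omega0)
    (hC : ∀ n, IsNowhereDense (bond π n ⁻¹' {p.1 0})) :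
    (∀ κ : Cardinal, κ.IsRegular → ℵ₀ < κ →
      ∀ f : κ.ord.ToType → {f : ∀ n, X n // ∀ n, π n (f (n + 1)) = f n},
        (∀ α, f α ≠ p) → ¬ ConvergesTo κ f p) ∧
    ((∀ n, weight (X n) = aleph n) →
      character p = aleph Ordinal.omega0 ∧
      weight {f : ∀ n, X n // ∀ n, π n (f (n + 1)) = f n} = aleph Ordinal.omega0) := by
  refine ⟨fun κ hκ hκ₀ f hf => InverseLimit.not_convergesTo hA hB hκ hκ₀ (by simp) hf,
    fun hw => ?_⟩
  have hχ := InverseLimit.aleph_omega0_le_character hcont hsurj hA hC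
  have hwχ := character_le_weight p
  have hwω := InverseLimit.weight_le hcont (aleph0_le_aleph _) fun n =>
    (hw n).trans_le (aleph_natCast_le_aleph_omega0 n)
  exact ⟨le_antisymm (hwχ.trans hwω) hχ, le_antisymm hwω (hχ.trans hwχ)⟩

/-- Suppose `⟨X_n, π^{n+1}_n⟩` is an inverse system of compact Hausdorff spaces with
continuous surjective bonding maps, `p` a point of the inverse limit with projections
`p_n`, such that (A) each `p_n` is a weak `P_{ℵ_n}`-point of `X_n`, (B) each
`w(X_n) < ℵ_ω`, and (C) each `(π^n_0)⁻¹{p_0}` is nowhere dense in `X_n`.  Then for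
every regular uncountable `κ`, no `κ`-sequence of points distinct from `p` converges to
`p`; and if moreover `w(X_n) = ℵ_n` for each `n`, then `χ(p,X) = w(X) = ℵ_ω`. -/
theorem inverse_limit_lemma (X : ℕ → Type) [∀ n, TopologicalSpace (X n)]
    [∀ n, CompactSpace (X n)] [∀ n, T2Space (X n)]
    (π : ∀ n, X (n + 1) → X n) (hcont : ∀ n, Continuous (π n))
    (hsurj : ∀ n, Function.Surjective (π n))
    (p : {f : ∀ n, X n // ∀ n, π n (f (n + 1)) = f n})
    (hA : ∀ n, ∀ S : Set (X n), S ⊆ {p.1 n}ᶜ → #S < aleph n → p.1 n ∉ closure S)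
    (hB : ∀ n, weight (X n) < aleph Ordinal.omega0)
    (hC : ∀ n, IsNowhereDense (bond π n ⁻¹' {p.1 0})) :
    (∀ κ : Cardinal, κ.IsRegular → ℵ₀ < κ →
      ∀ f : κ.ord.ToType → {f : ∀ n, X n // ∀ n, π n (f (n + 1)) = f n},
        (∀ α, f α ≠ p) → ¬ ConvergesTo κ f p) ∧
    ((∀ n, weight (X n) = aleph n) →
      character p = aleph Ordinal.omega0 ∧
      weight {f : ∀ n, X n // ∀ n, π n (f (n + 1)) = f n} = aleph Ordinal.omega0) :=
  inverse_limit_lemma_general X π hcont hsurj p hA hB hC
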